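/- If n is even and m is odd, then no string x of length n over {A,C,G,T} with GC-content m satisfies x = x^r; otherwise (n odd, or both n and m with compatible parity), the number of such strings is C(⌊n/2⌋, ⌊m/2⌋)·2^{⌈n/2⌉}. -/

import Mathlib

/-- The reverse of a DNA string. -/
def dnaRev {n : ℕ} (x : Fin n → Fin 4) : Fin n → Fin 4 := fun i => x i.rev

/-- GC-content: the number of coordinates equal to `G` or `C` (here `1` or `2`). -/
def gcContent {n : ℕ} (x : Fin n → Fin 4) : ℕ :=
  (Finset.univ.filter (fun i => x i = 1 ∨ x i = 2)).card

/-!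
A palindrome of length `a + b`, with `b ≤ a ≤ b + 1`, is determined by its first `a` letters
`u`: it is `u` followed by the reverse of the first `b` letters of `u`. For even `n = k + k` its
GC-content is therefore `2 · gc(u)`, and for odd `n = (k + 1) + k`, writing `u = y ++ [c]`, it is
`2 · gc(y) + [c ∈ {C, G}]`. It remains to count strings of length `k` with prescribed
GC-content: choose the `j` GC positions, then one of two letters at every position.
-/

open Finset

theorem card_filter_card_filter_eq {ι α : Type*} [Fintype ι] [DecidableEq ι] [Fintype α]
    (p : α → Prop) [DecidablePred p] (k : ℕ) :
    #{x : ι → α | #{i | p (x i)} = k} =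
      (Fintype.card ι).choose k * #{a | p a} ^ k * #{a | ¬ p a} ^ (Fintype.card ι - k) := by
  rw [card_eq_sum_card_fiberwise (f := fun x : ι → α => ({i | p (x i)} : Finset ι))
    (t := powersetCard k univ) (fun x hx => by simpa [mem_powersetCard_univ] using hx)]
  have fiber : ∀ S ∈ powersetCard k (univ : Finset ι),
      #{x ∈ {x : ι → α | #{i | p (x i)} = k} | ({i | p (x i)} : Finset ι) = S} =
        #{a | p a} ^ k * #{a | ¬ p a} ^ (Fintype.card ι - k) := by
    intro S hS
    rw [mem_powersetCard_univ] at hS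
    have fiber_eq_piFinset :
        ({x ∈ {x : ι → α | #{i | p (x i)} = k} | ({i | p (x i)} : Finset ι) = S} :
            Finset (ι → α)) =
          Fintype.piFinset fun i => if i ∈ S then univ.filter p else univ.filter (¬ p ·) := by
      ext x
      simp only [mem_filter, mem_univ, true_and, Fintype.mem_piFinset]
      constructor
      · rintro ⟨-, rfl⟩ i
        by_cases h : p (x i) <;> simp [h]
      · intro hx
        have hS' : ({i | p (x i)} : Finset ι) = S := by
          ext i
          have := hx i
          by_cases hi : i ∈ S <;> simp_all
        exact ⟨hS' ▸ hS, hS'⟩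
    rw [fiber_eq_piFinset, Fintype.card_piFinset]
    simp only [apply_ite Finset.card]
    rw [prod_ite, prod_const, prod_const, filter_mem_eq_inter, univ_inter,
      filter_notMem_eq_sdiff, card_univ_sdiff, hS]
  rw [sum_congr rfl fiber, sum_const, card_powersetCard, card_univ, smul_eq_mul, mul_assoc]

section Mirror

variable {α : Type*} {a b : ℕ}

def mirror (hba : b ≤ a) (u : Fin a → α) : Fin (a + b) → α :=
  Fin.append u fun j => u (Fin.castLE hba j.rev)

@[simp]
theorem mirror_castAdd (hba : b ≤ a) (u : Fin a → α) (j : Fin a) :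
    mirror hba u (Fin.castAdd b j) = u j :=
  Fin.append_left _ _ _

@[simp]
theorem mirror_natAdd (hba : b ≤ a) (u : Fin a → α) (j : Fin b) :
    mirror hba u (Fin.natAdd a j) = u (Fin.castLE hba j.rev) :=
  Fin.append_right _ _ _

theorem rev_natAdd_eq_castAdd_castLE (hba : b ≤ a) (j : Fin b) :
    (Fin.natAdd a j).rev = Fin.castAdd b (Fin.castLE hba j.rev) :=
  Fin.ext (by simp only [Fin.val_rev, Fin.val_natAdd, Fin.val_castAdd, Fin.val_castLE]; omega)

theorem mirror_rev (hba : b ≤ a) (hab : a ≤ b + 1) (u : Fin a → α) (i : Fin (a + b)) :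
    mirror hba u i.rev = mirror hba u i := by
  have right (j : Fin b) :
      mirror hba u (Fin.natAdd a j).rev = mirror hba u (Fin.natAdd a j) := by
    rw [rev_natAdd_eq_castAdd_castLE hba, mirror_castAdd, mirror_natAdd]
  induction i using Fin.addCases with
  | right j => exact right j
  | left j =>
    induction h : (Fin.castAdd b j).rev using Fin.addCases with
    | right j' => rw [← Fin.rev_rev (Fin.castAdd b j), h, right]
    | left j' =>
      -- `i` and `i.rev` both lie in the left half, which forces `i` to be the middle position
      have hval := congrArg Fin.val h
      simp only [Fin.val_rev, Fin.val_castAdd] at hval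
      rw [show j' = j from Fin.ext (by omega)]

theorem mirror_castAdd_eq_self (hba : b ≤ a) {x : Fin (a + b) → α}
    (hx : ∀ i, x i.rev = x i) :
    mirror hba (fun j => x (Fin.castAdd b j)) = x := by
  funext i
  induction i using Fin.addCases with
  | left j => exact mirror_castAdd hba _ j
  | right j => rw [mirror_natAdd, ← rev_natAdd_eq_castAdd_castLE hba, hx]

theorem card_filter_and_eq_rev (hba : b ≤ a) (hab : a ≤ b + 1) [Fintype α] [DecidableEq α]
    (P : (Fin (a + b) → α) → Prop) [DecidablePred P] :
    #{x | P x ∧ x = fun i => x i.rev} = #{u | P (mirror hba u)} := by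
  refine card_nbij' (fun x j => x (Fin.castAdd b j)) (mirror hba) ?_ ?_ ?_ ?_
  · intro x hx
    simp only [coe_filter, mem_univ, true_and, Set.mem_ofPred_eq] at hx ⊢
    rw [mirror_castAdd_eq_self hba fun i => (congrFun hx.2 i).symm]
    exact hx.1
  · intro u hu
    simp only [coe_filter, mem_univ, true_and, Set.mem_ofPred_eq] at hu ⊢
    exact ⟨hu, funext fun i => (mirror_rev hba hab u i).symm⟩
  · intro x hx
    simp only [coe_filter, mem_univ, true_and, Set.mem_ofPred_eq] at hx
    exact mirror_castAdd_eq_self hba fun i => (congrFun hx.2 i).symm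
  · intro u _
    exact funext (mirror_castAdd hba u)

theorem card_filter_mirror (p : α → Prop) [DecidablePred p] (hba : b ≤ a) (u : Fin a → α) :
    #{i | p (mirror hba u i)} = #{i | p (u i)} + #{j : Fin b | p (u (Fin.castLE hba j))} := by
  simp only [card_filter, Fin.sum_univ_add, mirror_castAdd, mirror_natAdd]
  congr 1
  exact Equiv.sum_comp Fin.revPerm (fun j => if p (u (Fin.castLE hba j)) then 1 else 0)

theorem card_filter_snoc (p : α → Prop) [DecidablePred p] {k : ℕ} (y : Fin k → α) (c : α) :
    #{i | p (Fin.snoc (α := fun _ => α) y c i)} = #{i | p (y i)} + if p c then 1 else 0 := by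
  simp only [card_filter, Fin.sum_univ_castSucc, Fin.snoc_castSucc, Fin.snoc_last]

end Mirror

def IsGC (a : Fin 4) : Prop := a = 1 ∨ a = 2

instance : DecidablePred IsGC := fun a => inferInstanceAs (Decidable (a = 1 ∨ a = 2))

theorem gcContent_eq_card_filter_isGC {n : ℕ} (x : Fin n → Fin 4) :
    gcContent x = #{i | IsGC (x i)} :=
  rfl

theorem card_filter_gcContent_eq (h j : ℕ) :
    #{y : Fin h → Fin 4 | gcContent y = j} = h.choose j * 2 ^ h := by
  have count := card_filter_card_filter_eq (ι := Fin h) IsGC j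
  rw [Fintype.card_fin, show #{a | IsGC a} = 2 by decide, show #{a | ¬IsGC a} = 2 by decide]
    at count
  rcases le_or_gt j h with hj | hj
  · rwa [mul_assoc, ← pow_add, Nat.add_sub_cancel' hj] at count
  · rw [Nat.choose_eq_zero_of_lt hj, zero_mul, zero_mul] at count
    rwa [Nat.choose_eq_zero_of_lt hj, zero_mul]

theorem gcContent_mirror_self {k : ℕ} (u : Fin k → Fin 4) :
    gcContent (mirror le_rfl u) = 2 * gcContent u := by
  simp only [gcContent_eq_card_filter_isGC, card_filter_mirror, Fin.castLE_refl, two_mul]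

theorem gcContent_mirror_snoc {k : ℕ} (y : Fin k → Fin 4) (c : Fin 4) :
    gcContent (mirror k.le_succ (Fin.snoc y c)) = 2 * gcContent y + if IsGC c then 1 else 0 := by
  have castLE_eq_castSucc : ∀ j : Fin k, Fin.castLE k.le_succ j = j.castSucc := fun _ => rfl
  simp only [gcContent_eq_card_filter_isGC, card_filter_mirror, card_filter_snoc,
    castLE_eq_castSucc, Fin.snoc_castSucc]
  ring

theorem card_filter_gcContent_mirror_self (k m : ℕ) :
    #{u : Fin k → Fin 4 | gcContent (mirror le_rfl u) = m} =
      if Odd m then 0 else k.choose (m / 2) * 2 ^ k := by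
  simp only [gcContent_mirror_self]
  split_ifs with hm
  · rw [card_eq_zero, filter_eq_empty_iff]
    rintro u - hu
    exact Nat.not_even_iff_odd.2 hm ⟨gcContent u, by omega⟩
  · obtain ⟨r, rfl⟩ := Nat.not_odd_iff_even.1 hm
    rw [← card_filter_gcContent_eq]
    congr 1
    ext u
    simp only [mem_filter_univ]
    omega

theorem card_filter_gcContent_mirror_succ (k m : ℕ) :
    #{u : Fin (k + 1) → Fin 4 | gcContent (mirror k.le_succ u) = m} =
      k.choose (m / 2) * 2 ^ (k + 1) := by
  have by_last :
      #{q : Fin 4 × (Fin k → Fin 4) | (IsGC q.1 ↔ Odd m) ∧ gcContent q.2 = m / 2} =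
        #{u | gcContent (mirror k.le_succ u) = m} := by
    refine card_equiv (Fin.snocEquiv fun _ => Fin 4) fun q => ?_
    obtain ⟨c, y⟩ := q
    simp only [mem_filter_univ]
    change _ ↔ gcContent (mirror k.le_succ (Fin.snoc y c)) = m
    rw [gcContent_mirror_snoc]
    by_cases hc : IsGC c <;>
      simp only [hc, if_true, if_false, Nat.odd_iff, true_iff, false_iff] <;> omega
  have half : #{c : Fin 4 | IsGC c ↔ Odd m} = 2 := by
    by_cases hm : Odd m <;> simp only [hm, iff_true, iff_false] <;> decide
  rw [← by_last, ← univ_product_univ, filter_product (p := fun c => IsGC c ↔ Odd m)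
    (q := fun y => gcContent y = m / 2), card_product, card_filter_gcContent_eq, half, pow_succ]
  ring

theorem count_gc_self_reverse_general (n m : ℕ) :
    (Finset.univ.filter
        (fun x : Fin n → Fin 4 => gcContent x = m ∧ x = dnaRev x)).card =
      if Even n ∧ Odd m then 0
      else Nat.choose (n / 2) (m / 2) * 2 ^ ((n + 1) / 2) := by
  obtain ⟨k, rfl⟩ | ⟨k, rfl⟩ : (∃ k, n = k + k) ∨ ∃ k, n = k + 1 + k := by
    rcases Nat.even_or_odd' n with ⟨k, rfl | rfl⟩
    exacts [.inl ⟨k, two_mul k⟩, .inr ⟨k, by ring⟩]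
  · refine (card_filter_and_eq_rev le_rfl k.le_succ (gcContent · = m)).trans ?_
    rw [card_filter_gcContent_mirror_self, show (k + k) / 2 = k by omega,
      show (k + k + 1) / 2 = k by omega]
    simp only [Even.add_self k, true_and]
  · refine (card_filter_and_eq_rev k.le_succ le_rfl (gcContent · = m)).trans ?_
    rw [card_filter_gcContent_mirror_succ,
      if_neg fun h => Nat.not_even_iff_odd.2 ⟨k, by ring⟩ h.1,
      show (k + 1 + k) / 2 = k by omega, show (k + 1 + k + 1) / 2 = k + 1 by omega]

/-- The number of DNA strings of length `n` with GC-content `m` equal to their own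
reverse is `0` if `n` is even and `m` is odd, and `C(⌊n/2⌋,⌊m/2⌋) · 2^(⌈n/2⌉)` otherwise. -/
theorem count_gc_self_reverse (n m : ℕ) (hn : 0 < n) (hm : 0 < m) (hmn : m ≤ n) :
    (Finset.univ.filter
        (fun x : Fin n → Fin 4 => gcContent x = m ∧ x = dnaRev x)).card =
      if Even n ∧ Odd m then 0
      else Nat.choose (n / 2) (m / 2) * 2 ^ ((n + 1) / 2) :=
  count_gc_self_reverse_general n m
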